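/- arXiv:2307.08664 — 7 statements merged into one kernel-verified Lean document; each statement's English description precedes it below -/
import Mathlib

section
/- For all m, n ≥ 0, the sum of sgn(σ) over all (m,n)-shuffles σ ∈ S_{m+n} equals 0 if both m and n are odd, and equals the binomial coefficient (⌊(m+n)/2⌋ choose ⌊m/2⌋) otherwise. -/
/-!
A shuffle is determined by the set `A` of values it takes on the first block, and its only
inversions are the pairs (first-block position, second-block position) that it reverses. Hence its
sign is `(-1)` to the number of pairs `a ∈ A`, `b ∉ A` with `b < a`. Summing this over all
`m`-subsets `A` of an `N`-element chain gives the Gaussian binomial `[N choose m]_q` at `q = -1`;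
removing the largest element yields the `q`-Pascal recursion, which at `q = -1` is solved by
`⌊N/2⌋ choose ⌊m/2⌋`, or `0` when `N` is even and `m` odd.
-/

open Finset

lemma Finset.sum_powersetCard_succ_insert {α β : Type*} [DecidableEq α] [AddCommMonoid β]
    {s : Finset α} {a : α} (ha : a ∉ s) (k : ℕ) (f : Finset α → β) :
    ∑ t ∈ (insert a s).powersetCard (k + 1), f t =
      ∑ t ∈ s.powersetCard (k + 1), f t + ∑ t ∈ s.powersetCard k, f (insert a t) := by
  rw [powersetCard_succ_insert ha, sum_union, sum_image]
  · exact insert_erase_invOn.2.injOn.mono fun t ht ↦ notMem_mono (mem_powersetCard.1 ht).1 ha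
  · aesop (add simp [disjoint_left, insert_subset_iff, mem_powersetCard])

/-- The Gaussian binomial coefficient `[N choose k]_q` evaluated at `q = -1`. -/
def negOneBinomial (N k : ℕ) : ℤ :=
  if N % 2 = 0 ∧ k % 2 = 1 then 0 else ((N / 2).choose (k / 2) : ℤ)

lemma negOneBinomial_zero_right (N : ℕ) : negOneBinomial N 0 = 1 := by
  simp [negOneBinomial]

lemma negOneBinomial_zero_succ (k : ℕ) : negOneBinomial 0 (k + 1) = 0 := by
  rcases Nat.even_or_odd' k with ⟨q, rfl | rfl⟩
  · simp [negOneBinomial, Nat.add_mod]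
  · simp [negOneBinomial, show (2 * q + 1 + 1) / 2 = q + 1 by omega]

lemma negOneBinomial_succ_succ (N k : ℕ) :
    negOneBinomial (N + 1) (k + 1) =
      negOneBinomial N (k + 1) + (-1) ^ (N + k) * negOneBinomial N k := by
  rcases Nat.even_or_odd' N with ⟨p, rfl | rfl⟩ <;>
    rcases Nat.even_or_odd' k with ⟨q, rfl | rfl⟩ <;>
    simp [negOneBinomial, Nat.add_mod, pow_add, pow_mul, Nat.choose_succ_succ,
      show (2 * p + 1 + 1) / 2 = p + 1 by omega, show (2 * q + 1 + 1) / 2 = q + 1 by omega,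
      show (2 * p + 1) / 2 = p by omega, show (2 * q + 1) / 2 = q by omega]
  ring

section crossSign

variable {α : Type*} [LinearOrder α]

def crossSign (S A : Finset α) : ℤˣ :=
  ∏ a ∈ A, ∏ b ∈ S \ A, if a < b then 1 else -1

lemma crossSign_empty_right (S : Finset α) : crossSign S ∅ = 1 := prod_empty

lemma crossSign_insert_of_forall_lt {S A : Finset α} {a : α} (hS : ∀ x ∈ S, x < a)
    (hA : A ⊆ S) :
    crossSign (insert a S) A = crossSign S A := by
  have haA : a ∉ A := fun h => (hS a (hA h)).false
  refine prod_congr rfl fun x hx => ?_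
  rw [insert_sdiff_of_notMem _ haA, prod_insert fun h => (hS a (mem_sdiff.1 h).1).false,
    if_pos (hS x (hA hx)), one_mul]

lemma crossSign_insert_insert_of_forall_lt {S A : Finset α} {a : α} (hS : ∀ x ∈ S, x < a)
    (hA : A ⊆ S) :
    crossSign (insert a S) (insert a A) = (-1) ^ #(S \ A) * crossSign S A := by
  have haA : a ∉ A := fun h => (hS a (hA h)).false
  have hsdiff : insert a S \ insert a A = S \ A := by
    rw [insert_sdiff_insert, sdiff_insert_of_notMem fun h => (hS a h).false]
  have hlast : ∏ b ∈ S \ A, (if a < b then 1 else -1 : ℤˣ) = (-1) ^ #(S \ A) :=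
    (prod_congr rfl fun b hb => if_neg (hS b (mem_sdiff.1 hb).1).asymm).trans (prod_const _)
  rw [crossSign, prod_insert haA, hsdiff, hlast, crossSign]

theorem sum_powersetCard_crossSign (S : Finset α) (k : ℕ) :
    ∑ A ∈ S.powersetCard k, (crossSign S A : ℤ) = negOneBinomial #S k := by
  induction S using Finset.induction_on_max generalizing k with
  | empty =>
    cases k with
    | zero => simp [crossSign_empty_right, negOneBinomial_zero_right]
    | succ k =>
      rw [powersetCard_eq_empty.2 (by simp), sum_empty, card_empty, negOneBinomial_zero_succ]
  | insert a S hS ih =>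
    have haS : a ∉ S := fun h => (hS a h).false
    cases k with
    | zero => simp [crossSign_empty_right, negOneBinomial_zero_right]
    | succ k =>
      rw [sum_powersetCard_succ_insert haS, card_insert_of_notMem haS, negOneBinomial_succ_succ,
        ← ih, ← ih, mul_sum]
      congr 1
      · refine sum_congr rfl fun A hA => ?_
        rw [crossSign_insert_of_forall_lt hS (mem_powersetCard.1 hA).1]
      · refine sum_congr rfl fun A hA => ?_
        obtain ⟨hAS, hcard⟩ := mem_powersetCard.1 hA
        have hpar : #S + k = #(S \ A) + 2 * k := by
          rw [card_sdiff_of_subset hAS, hcard]; have := card_le_card hAS; omega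
        rw [crossSign_insert_insert_of_forall_lt hS hAS, hpar, pow_add, pow_mul]
        push_cast
        ring

end crossSign

section Shuffle

open Equiv Fin

variable {m n : ℕ}

abbrev IsShuffle (σ : Perm (Fin (m + n))) : Prop :=
  (∀ i j : Fin (m + n), (i : ℕ) < m → (j : ℕ) < m → i < j → σ i < σ j) ∧
  (∀ i j : Fin (m + n), m ≤ (i : ℕ) → m ≤ (j : ℕ) → i < j → σ i < σ j)

def imageCastAdd (σ : Perm (Fin (m + n))) : Finset (Fin (m + n)) :=
  univ.map ((castAddEmb n).trans σ.toEmbedding)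

lemma card_imageCastAdd (σ : Perm (Fin (m + n))) : #(imageCastAdd σ) = m := by
  simp [imageCastAdd]

lemma compl_imageCastAdd (σ : Perm (Fin (m + n))) :
    (imageCastAdd σ)ᶜ = univ.map ((natAddEmb m).trans σ.toEmbedding) := by
  ext x
  obtain ⟨y, rfl⟩ := σ.surjective x
  induction y using Fin.addCases <;> simp [imageCastAdd, Fin.ext_iff] <;> omega

lemma range_comp_castAdd (σ : Perm (Fin (m + n))) :
    Set.range (σ ∘ castAdd n) = imageCastAdd σ := by
  rw [imageCastAdd, coe_map, coe_univ, Set.image_univ]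
  rfl

lemma range_comp_natAdd (σ : Perm (Fin (m + n))) :
    Set.range (σ ∘ natAdd m) = ↑(imageCastAdd σ)ᶜ := by
  rw [compl_imageCastAdd, coe_map, coe_univ, Set.image_univ]
  rfl

namespace IsShuffle

variable {σ : Perm (Fin (m + n))}

lemma strictMono_comp_castAdd (hσ : IsShuffle σ) : StrictMono (σ ∘ castAdd n) :=
  fun i j hij => hσ.1 _ _ i.2 j.2 hij

lemma strictMono_comp_natAdd (hσ : IsShuffle σ) : StrictMono (σ ∘ natAdd m) :=
  fun i j hij =>
    hσ.2 _ _ (Nat.le_add_right m i) (Nat.le_add_right m j) ((natAdd_lt_natAdd_iff m).2 hij)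

lemma eq_of_imageCastAdd_eq {τ : Perm (Fin (m + n))} (hσ : IsShuffle σ) (hτ : IsShuffle τ)
    (h : imageCastAdd σ = imageCastAdd τ) : σ = τ := by
  have hfirst : σ ∘ castAdd n = τ ∘ castAdd n :=
    (hσ.strictMono_comp_castAdd.range_inj hτ.strictMono_comp_castAdd).1 <| by
      rw [range_comp_castAdd, range_comp_castAdd, h]
  have hsecond : σ ∘ natAdd m = τ ∘ natAdd m :=
    (hσ.strictMono_comp_natAdd.range_inj hτ.strictMono_comp_natAdd).1 <| by
      rw [range_comp_natAdd, range_comp_natAdd, h]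
  ext x
  induction x using Fin.addCases with
  | left i => exact congrArg Fin.val (congrFun hfirst i)
  | right j => exact congrArg Fin.val (congrFun hsecond j)

/-- Pairs of positions inside one block are never inversions of a shuffle. -/
lemma sign_eq_prod (hσ : IsShuffle σ) :
    Perm.sign σ =
      ∏ i : Fin m, ∏ j : Fin n, if σ (castAdd n i) < σ (natAdd m j) then 1 else -1 := by
  have hfirst (j : Fin m) :
      ∏ i ∈ Iio (castAdd n j), (if σ i < σ (castAdd n j) then 1 else -1 : ℤˣ) = 1 :=
    prod_eq_one fun i hi =>
      if_pos (hσ.1 _ _ ((Fin.lt_def.1 (mem_Iio.1 hi)).trans j.2) j.2 (mem_Iio.1 hi))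
  have hsecond (j : Fin n) :
      ∏ i ∈ Iio (natAdd m j), (if σ i < σ (natAdd m j) then 1 else -1 : ℤˣ) =
        ∏ i : Fin m, if σ (castAdd n i) < σ (natAdd m j) then 1 else -1 := by
    refine ((prod_map univ (castAddEmb n) _).symm.trans
      (prod_subset (fun i hi => ?_) fun i hi hi' => if_pos ?_)).symm
    · obtain ⟨k, -, rfl⟩ := mem_map.1 hi
      exact mem_Iio.2 (Fin.lt_def.2 (by simp; omega))
    · refine hσ.2 _ _ ?_ (Nat.le_add_right m j) (mem_Iio.1 hi)
      by_contra! him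
      exact hi' (mem_map.2 ⟨⟨i, him⟩, mem_univ _, rfl⟩)
  rw [Perm.sign_eq_prod_prod_Iio, prod_univ_add, prod_congr rfl fun j _ => hfirst j,
    prod_const_one, one_mul, prod_congr rfl fun j _ => hsecond j, prod_comm]

lemma sign_eq_crossSign (hσ : IsShuffle σ) : Perm.sign σ = crossSign univ (imageCastAdd σ) := by
  rw [hσ.sign_eq_prod, crossSign, ← compl_eq_univ_sdiff, compl_imageCastAdd, imageCastAdd,
    prod_map]
  simp_rw [prod_map]
  rfl

end IsShuffle

lemma isShuffle_iff {σ : Perm (Fin (m + n))} :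
    IsShuffle σ ↔ StrictMono (σ ∘ castAdd n) ∧ StrictMono (σ ∘ natAdd m) := by
  refine ⟨fun hσ => ⟨hσ.strictMono_comp_castAdd, hσ.strictMono_comp_natAdd⟩,
    fun ⟨h1, h2⟩ => ⟨fun i j hi hj hij => h1 (a := ⟨i, hi⟩) (b := ⟨j, hj⟩) hij,
      fun i j hi hj hij => ?_⟩⟩
  obtain ⟨i, rfl⟩ : ∃ k : Fin n, natAdd m k = i :=
    ⟨⟨i - m, by omega⟩, Fin.ext (by simp; omega)⟩
  obtain ⟨j, rfl⟩ : ∃ k : Fin n, natAdd m k = j :=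
    ⟨⟨j - m, by omega⟩, Fin.ext (by simp; omega)⟩
  exact h2 ((natAdd_lt_natAdd_iff m).1 hij)

def shuffleOfFinset (A : Finset (Fin (m + n))) (hA : #A = m) : Perm (Fin (m + n)) :=
  finSumFinEquiv.symm.trans <|
    (sumCongr (A.orderIsoOfFin hA).toEquiv
      ((Aᶜ.orderIsoOfFin (by simp [card_compl, hA])).toEquiv.trans
        (subtypeEquivRight fun _ => mem_compl))).trans
    (sumCompl (· ∈ A))

section shuffleOfFinset

variable (A : Finset (Fin (m + n))) (hA : #A = m)

@[simp]
lemma shuffleOfFinset_castAdd (i : Fin m) :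
    shuffleOfFinset A hA (castAdd n i) = A.orderEmbOfFin hA i := by
  simp [shuffleOfFinset]

@[simp]
lemma shuffleOfFinset_natAdd (j : Fin n) :
    shuffleOfFinset A hA (natAdd m j) = Aᶜ.orderEmbOfFin (by simp [card_compl, hA]) j := by
  simp [shuffleOfFinset]

lemma isShuffle_shuffleOfFinset : IsShuffle (shuffleOfFinset A hA) :=
  isShuffle_iff.2 ⟨fun i j h => by simpa using h, fun i j h => by simpa using h⟩

lemma imageCastAdd_shuffleOfFinset : imageCastAdd (shuffleOfFinset A hA) = A := by
  rw [← coe_inj, ← range_comp_castAdd, ← range_orderEmbOfFin A hA]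
  congr 1
  funext i
  simp

end shuffleOfFinset

theorem sum_sign_shuffles :
    ∑ σ ∈ univ.filter (IsShuffle (m := m) (n := n)), (Perm.sign σ : ℤ) =
      negOneBinomial (m + n) m := by
  have hsubsets := sum_powersetCard_crossSign (univ : Finset (Fin (m + n))) m
  rw [card_univ, Fintype.card_fin] at hsubsets
  rw [← hsubsets]
  refine sum_bij' (fun σ _ => imageCastAdd σ)
    (fun A hA => shuffleOfFinset A (mem_powersetCard_univ.1 hA)) (fun σ _ => ?_) (fun A hA => ?_)
    (fun σ hσ => ?_) (fun A hA => imageCastAdd_shuffleOfFinset _ _) (fun σ hσ => ?_)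
  · exact mem_powersetCard_univ.2 (card_imageCastAdd σ)
  · exact mem_filter.2 ⟨mem_univ _, isShuffle_shuffleOfFinset _ _⟩
  · exact (isShuffle_shuffleOfFinset _ _).eq_of_imageCastAdd_eq (mem_filter.1 hσ).2
      (imageCastAdd_shuffleOfFinset _ _)
  · rw [(mem_filter.1 hσ).2.sign_eq_crossSign]

end Shuffle

/-- **Signed sum over shuffles.**
An `(m,n)`-shuffle is a permutation of `Fin (m+n)` that is strictly increasing on the
first `m` indices and on the last `n` indices.  The sum of the signs of all
`(m,n)`-shuffles is `0` if both `m` and `n` are odd, and the binomial coefficient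
`⌊(m+n)/2⌋ choose ⌊m/2⌋` otherwise. -/
theorem statement0 (m n : ℕ) :
    (∑ σ ∈ Finset.univ.filter (fun σ : Equiv.Perm (Fin (m + n)) =>
        (∀ i j : Fin (m + n), (i : ℕ) < m → (j : ℕ) < m → i < j → σ i < σ j) ∧
        (∀ i j : Fin (m + n), m ≤ (i : ℕ) → m ≤ (j : ℕ) → i < j → σ i < σ j)),
      (Equiv.Perm.sign σ : ℤ)) =
    if m % 2 = 1 ∧ n % 2 = 1 then 0 else (((m + n) / 2).choose (m / 2) : ℤ) := by
  rw [sum_sign_shuffles, negOneBinomial]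
  exact if_congr (by omega) rfl rfl
end

section
/- Let c : ℤ[G] → ΛH be the ring homomorphism from the group ring of the free group G on generators γ_1,...,γ_k to the exterior algebra of H = G^{ab}, defined by γ_i ↦ 1 + [γ_i] and γ_i^{-1} ↦ 1 − [γ_i]. Let c₂ be its component in Λ²H. Then for the element ζ_g = γ₁γ₂γ₁⁻¹γ₂⁻¹ ⋯ γ_{2g-1}γ_{2g}γ_{2g-1}⁻¹γ_{2g}⁻¹ in the free group on 2g generators, c₂(ζ_g) = 2ω, where ω = [γ₁]∧[γ₂] + [γ₃]∧[γ₄] + ⋯ + [γ_{2g-1}]∧[γ_{2g}]. -/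
/-!
The content of a commutator `[γᵢ, γⱼ]` is
`(1 + [γᵢ])(1 + [γⱼ])(1 - [γᵢ])(1 - [γⱼ]) = 1 + 2 [γᵢ]∧[γⱼ]`, since in `ΛH` squares of
vectors vanish and vectors anticommute. Hence `c(ζ_g)` is a product of factors `1 + xᵢ` with
every `xᵢ` of degree `2`; the degree `0` part of such a product is `1`, so by induction its
degree `2` part is `∑ xᵢ = 2ω`.
-/

noncomputable section

/-- The basis vector `[γ_i]` of `H = ℤ^{2g}`. -/
def hbasis (g : ℕ) (i : Fin (2 * g)) : Fin (2 * g) → ℤ := Pi.single i 1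

/-- The unit `1 + [γ_i]` of the exterior algebra `ΛH`, with inverse `1 − [γ_i]`. -/
def contentUnit (g : ℕ) (i : Fin (2 * g)) : (ExteriorAlgebra ℤ (Fin (2 * g) → ℤ))ˣ where
  val := 1 + ExteriorAlgebra.ι ℤ (hbasis g i)
  inv := 1 - ExteriorAlgebra.ι ℤ (hbasis g i)
  val_inv := by
    have h := ExteriorAlgebra.ι_sq_zero (R := ℤ) (hbasis g i)
    noncomm_ring [h]
  inv_val := by
    have h := ExteriorAlgebra.ι_sq_zero (R := ℤ) (hbasis g i)
    noncomm_ring [h]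

/-- The content homomorphism `c`, restricted to the free group `G` on `2g` generators:
the multiplicative map `G → (ΛH)ˣ` with `γ_i ↦ 1 + [γ_i]` (hence `γ_i⁻¹ ↦ 1 − [γ_i]`). -/
def contentHom (g : ℕ) : FreeGroup (Fin (2 * g)) →* (ExteriorAlgebra ℤ (Fin (2 * g) → ℤ))ˣ :=
  FreeGroup.lift (contentUnit g)

/-- `ζ_g = γ₁γ₂γ₁⁻¹γ₂⁻¹ ⋯ γ_{2g−1}γ_{2g}γ_{2g−1}⁻¹γ_{2g}⁻¹`. -/
def zetaWord (g : ℕ) : FreeGroup (Fin (2 * g)) :=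
  (List.ofFn fun i : Fin g =>
    FreeGroup.of (⟨2 * (i : ℕ), by omega⟩ : Fin (2 * g)) *
      FreeGroup.of (⟨2 * (i : ℕ) + 1, by omega⟩ : Fin (2 * g)) *
      (FreeGroup.of (⟨2 * (i : ℕ), by omega⟩ : Fin (2 * g)))⁻¹ *
      (FreeGroup.of (⟨2 * (i : ℕ) + 1, by omega⟩ : Fin (2 * g)))⁻¹).prod

open ExteriorAlgebra DirectSum

lemma one_add_mul_one_add_mul_one_sub_mul_one_sub {A : Type*} [Ring A] {a b : A}
    (ha : a * a = 0) (hb : b * b = 0) (hba : b * a = -(a * b)) :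
    (1 + a) * (1 + b) * (1 - a) * (1 - b) = 1 + 2 • (a * b) := by
  have haab : a * (a * b) = 0 := by rw [← mul_assoc, ha, zero_mul]
  noncomm_ring [ha, hb, hba, haab]

lemma ExteriorAlgebra.ι_mul_ι_mem_exteriorPower_two {R M : Type*} [CommRing R] [AddCommGroup M]
    [Module R M] (u v : M) : ι R u * ι R v ∈ ⋀[R]^2 M := by
  have h := ιMulti_range R 2 (Set.mem_range_self ![u, v])
  rwa [ιMulti_apply, List.ofFn_succ, List.ofFn_succ, List.ofFn_zero, List.prod_cons,
    List.prod_cons, List.prod_nil, mul_one] at h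

section GradedRing

variable {A σ : Type*} [Semiring A] [SetLike σ A] [AddSubmonoidClass σ A] (𝒜 : ℕ → σ)
  [GradedRing 𝒜] {n : ℕ} {L : List A}

lemma DirectSum.coe_decompose_list_prod_one_add_zero (hn : n ≠ 0) (hL : ∀ x ∈ L, x ∈ 𝒜 n) :
    (decompose 𝒜 (L.map (1 + ·)).prod 0 : A) = 1 := by
  rw [← GradedRing.projZeroRingHom_apply, map_list_prod, List.map_map]
  refine List.prod_eq_one fun y hy => ?_
  obtain ⟨x, hx, rfl⟩ := List.mem_map.1 hy
  rw [Function.comp_apply, map_add, map_one, GradedRing.projZeroRingHom_apply,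
    decompose_of_mem_ne 𝒜 (hL x hx) hn, add_zero]

lemma DirectSum.coe_decompose_list_prod_one_add_of_mem (hn : n ≠ 0) (hL : ∀ x ∈ L, x ∈ 𝒜 n) :
    (decompose 𝒜 (L.map (1 + ·)).prod n : A) = L.sum := by
  induction L with
  | nil =>
    rw [List.map_nil, List.prod_nil, decompose_of_mem_ne 𝒜 SetLike.GradedOne.one_mem hn.symm,
      List.sum_nil]
  | cons x L ih =>
    have hx : x ∈ 𝒜 n := hL x List.mem_cons_self
    have hL' : ∀ y ∈ L, y ∈ 𝒜 n := fun y hy => hL y (List.mem_cons_of_mem x hy)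
    rw [List.map_cons, List.prod_cons, add_mul, one_mul, decompose_add, add_apply,
      AddMemClass.coe_add, ih hL', coe_decompose_mul_of_left_mem_of_le 𝒜 hx le_rfl, Nat.sub_self,
      coe_decompose_list_prod_one_add_zero 𝒜 hn hL', mul_one, List.sum_cons, add_comm]

end GradedRing

lemma contentHom_commutator_of (g : ℕ) (i j : Fin (2 * g)) :
    (contentHom g (FreeGroup.of i * FreeGroup.of j * (FreeGroup.of i)⁻¹ * (FreeGroup.of j)⁻¹) :
        ExteriorAlgebra ℤ (Fin (2 * g) → ℤ)) =
      1 + 2 • (ι ℤ (hbasis g i) * ι ℤ (hbasis g j)) := by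
  simp only [contentHom, map_mul, map_inv, FreeGroup.lift_apply_of, Units.val_mul]
  exact one_add_mul_one_add_mul_one_sub_mul_one_sub (ι_sq_zero _) (ι_sq_zero _)
    (eq_neg_of_add_eq_zero_left (ι_add_mul_swap _ _))

/-- **`c₂(ζ_g) = 2ω`.**  The component in `Λ²H` of the content of the boundary word
`ζ_g` equals `2ω`, where `ω = [γ₁]∧[γ₂] + [γ₃]∧[γ₄] + ⋯ + [γ_{2g−1}]∧[γ_{2g}]`. -/
theorem statement3 (g : ℕ) :
    GradedAlgebra.proj (fun i : ℕ => ⋀[ℤ]^i (Fin (2 * g) → ℤ)) 2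
        ((contentHom g (zetaWord g) : (ExteriorAlgebra ℤ (Fin (2 * g) → ℤ))ˣ) :
          ExteriorAlgebra ℤ (Fin (2 * g) → ℤ)) =
      2 • ∑ i : Fin g,
        ExteriorAlgebra.ι ℤ (hbasis g ⟨2 * (i : ℕ), by omega⟩) *
          ExteriorAlgebra.ι ℤ (hbasis g ⟨2 * (i : ℕ) + 1, by omega⟩) := by
  set x : Fin g → ExteriorAlgebra ℤ (Fin (2 * g) → ℤ) := fun i =>
    2 • (ι ℤ (hbasis g ⟨2 * (i : ℕ), by omega⟩) * ι ℤ (hbasis g ⟨2 * (i : ℕ) + 1, by omega⟩))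
  have hζ : (contentHom g (zetaWord g) : ExteriorAlgebra ℤ (Fin (2 * g) → ℤ)) =
      ((List.ofFn x).map (1 + ·)).prod := by
    rw [zetaWord, map_list_prod, ← Units.coeHom_apply, map_list_prod, List.map_map,
      List.map_ofFn, List.map_ofFn]
    congr 2 with i
    exact contentHom_commutator_of g _ _
  have hx : ∀ y ∈ List.ofFn x, y ∈ ⋀[ℤ]^2 (Fin (2 * g) → ℤ) := by
    simp only [List.mem_ofFn, forall_exists_index]
    rintro _ i rfl
    exact Submodule.smul_of_tower_mem _ 2 (ι_mul_ι_mem_exteriorPower_two _ _)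
  rw [GradedAlgebra.proj_apply, hζ,
    coe_decompose_list_prod_one_add_of_mem (fun i : ℕ => ⋀[ℤ]^i (Fin (2 * g) → ℤ)) two_ne_zero hx,
    List.sum_ofFn, Finset.smul_sum]

end
end

section
/- For u ≥ 0 and 0 ≤ k ≤ ⌊u/2⌋, the number of sparse subsets S ⊆ {1,...,u} of cardinality k equals (u choose k) − (u choose k−1), where (u choose −1) = 0. -/
/-!
Deleting the element `u + 1` splits the sparse `(k + 1)`-subsets of `{1, …, u + 1}` into the
sparse `(k + 1)`-subsets of `{1, …, u}` and, as long as `2 (k + 1) ≤ u + 1`, all sparse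
`k`-subsets of `{1, …, u}`: adding `u + 1` to one of those keeps every prefix count within
bounds. This is Pascal's recursion, which the differences `C(u, k + 1) - C(u, k)` also satisfy;
at the boundary `u = 2k + 1` the count vanishes, as does `C(2k + 1, k + 1) - C(2k + 1, k)`.
-/

open Finset

def SparseSet (S : Finset ℕ) : Prop :=
  ∀ i : ℕ, 2 * (S.filter (· ≤ i)).card ≤ i

noncomputable instance : DecidablePred SparseSet := fun _ => Classical.dec _

theorem SparseSet.mono {S T : Finset ℕ} (h : S ⊆ T) (hT : SparseSet T) : SparseSet S :=
  fun i => (Nat.mul_le_mul_left 2 (card_le_card (filter_subset_filter _ h))).trans (hT i)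

theorem SparseSet.two_mul_card_le {S : Finset ℕ} {u : ℕ} (h : SparseSet S)
    (hS : S ⊆ Icc 1 u) : 2 * #S ≤ u := by
  simpa [filter_true_of_mem fun x hx => (mem_Icc.1 (hS hx)).2] using h u

theorem add_one_notMem_of_subset_Icc {T : Finset ℕ} {u : ℕ} (hT : T ⊆ Icc 1 u) :
    u + 1 ∉ T :=
  fun hu => by simpa using (mem_Icc.1 (hT hu)).2

theorem sparseSet_insert_iff {T : Finset ℕ} {u : ℕ} (hT : T ⊆ Icc 1 u) :
    SparseSet (insert (u + 1) T) ↔ SparseSet T ∧ 2 * (#T + 1) ≤ u + 1 := by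
  refine ⟨fun h => ⟨h.mono (subset_insert _ _), ?_⟩, fun ⟨hsp, hcard⟩ i => ?_⟩
  · have hsub : insert (u + 1) T ⊆ Icc 1 (u + 1) :=
      insert_subset (by simp) (hT.trans (Icc_subset_Icc_right (by omega)))
    simpa [card_insert_of_notMem (add_one_notMem_of_subset_Icc hT)] using h.two_mul_card_le hsub
  · rw [filter_insert]
    split_ifs with hi
    · have := (card_insert_le (u + 1) (T.filter (· ≤ i))).trans
        (Nat.succ_le_succ (card_filter_le T (· ≤ i)))
      omega
    · exact hsp i

noncomputable def sparseSubsets (u k : ℕ) : Finset (Finset ℕ) :=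
  (Icc 1 u).powerset.filter fun S => #S = k ∧ SparseSet S

theorem sparseSubsets_zero (u : ℕ) : sparseSubsets u 0 = {∅} := by
  ext S
  simp only [sparseSubsets, mem_filter, mem_powerset, card_eq_zero, mem_singleton]
  constructor
  · exact fun h => h.2.1
  · rintro rfl
    exact ⟨empty_subset _, rfl, fun i => by simp⟩

theorem sparseSubsets_eq_empty {u k : ℕ} (h : u < 2 * k) : sparseSubsets u k = ∅ := by
  refine filter_eq_empty_iff.2 fun S hS ⟨hcard, hsp⟩ => ?_
  have := hsp.two_mul_card_le (mem_powerset.1 hS)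
  omega

theorem card_sparseSubsets_succ {u k : ℕ} (h : 2 * (k + 1) ≤ u + 1) :
    #(sparseSubsets (u + 1) (k + 1)) = #(sparseSubsets u (k + 1)) + #(sparseSubsets u k) := by
  have hins : (Icc 1 u).powerset.filter
      (fun T => #(insert (u + 1) T) = k + 1 ∧ SparseSet (insert (u + 1) T)) =
      sparseSubsets u k := by
    refine filter_congr fun T hT => ?_
    rw [mem_powerset] at hT
    rw [card_insert_of_notMem (add_one_notMem_of_subset_Icc hT), sparseSet_insert_iff hT]
    exact ⟨fun ⟨hc, hsp, _⟩ => ⟨by omega, hsp⟩, fun ⟨hc, hsp⟩ => ⟨by omega, hsp, by omega⟩⟩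
  rw [sparseSubsets, ← insert_Icc_right_eq_Icc_add_one (by omega), powerset_insert,
    filter_union, filter_image, card_union_of_disjoint, card_image_of_injOn, hins]
  · rfl
  · intro S hS T hT hST
    have hS' := mem_powerset.1 (mem_filter.1 hS).1
    have hT' := mem_powerset.1 (mem_filter.1 hT).1
    rw [← erase_insert (add_one_notMem_of_subset_Icc hS'), hST,
      erase_insert (add_one_notMem_of_subset_Icc hT')]
  · refine disjoint_left.2 fun S hS hS' => ?_
    obtain ⟨T, -, rfl⟩ := mem_image.1 hS'
    exact add_one_notMem_of_subset_Icc (mem_powerset.1 (mem_filter.1 hS).1) (mem_insert_self _ _)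

theorem card_sparseSubsets_add_choose {u k : ℕ} (h : 2 * (k + 1) ≤ u) :
    #(sparseSubsets u (k + 1)) + u.choose k = u.choose (k + 1) := by
  induction u generalizing k with
  | zero => omega
  | succ u ih =>
    have hk1 : #(sparseSubsets u (k + 1)) + u.choose k = u.choose (k + 1) := by
      rcases Nat.lt_or_ge u (2 * (k + 1)) with hu | hu
      · rw [sparseSubsets_eq_empty hu, card_empty, zero_add,
          show u = 2 * k + 1 by omega, Nat.choose_symm_half]
      · exact ih hu
    rw [card_sparseSubsets_succ (by omega), Nat.choose_succ_succ']
    rcases k with _ | j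
    · simp only [sparseSubsets_zero, card_singleton, Nat.choose_zero_right] at hk1 ⊢
      omega
    · have hj := ih (k := j) (by omega)
      rw [Nat.choose_succ_succ']
      omega

/-- **Counting sparse subsets.**  For `0 ≤ k ≤ ⌊u/2⌋`, the number of sparse subsets
`S ⊆ {1,…,u}` of cardinality `k` is `(u choose k) − (u choose (k−1))`, with the
convention `(u choose −1) = 0`. -/
theorem statement5 (u k : ℕ) (hk : k ≤ u / 2) :
    ((((Finset.Icc 1 u).powerset.filter
        (fun S => S.card = k ∧ SparseSet S)).card : ℤ)) =
      (u.choose k : ℤ) - (if k = 0 then 0 else (u.choose (k - 1) : ℤ)) := by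
  change (#(sparseSubsets u k) : ℤ) = _
  rcases k with _ | k
  · simp [sparseSubsets_zero]
  · have := card_sparseSubsets_add_choose (u := u) (k := k) (by omega)
    simp only [Nat.add_one_ne_zero, if_false, Nat.add_sub_cancel]
    omega
end

section
/- Let R be a commutative ring, u ≥ 0, and let B = R[z₁,...,z_u]/(z₁²,...,z_u²). For a subset S ⊆ {1,...,u} write z_S = ∏_{i∈S} z_i, and for k ≥ 0 set y^{[k]} = Σ_{|S|=k} z_S ∈ B. Then for any subset T ⊆ {1,...,u} with complement T̄, the inclusion-exclusion identity z_T = Σ_{S ⊆ T̄} (−1)^{|S|} y^{[|T|−|S|]} · z_S holds in B. -/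
open Finset

noncomputable section

/-- `B R u = R[z₁,…,z_u]/(z₁²,…,z_u²)`, the `R`-algebra on `u` square-zero variables. -/
abbrev SqZeroAlg (R : Type*) [CommRing R] (u : ℕ) : Type _ :=
  MvPolynomial (Fin u) R ⧸
    Ideal.span (Set.range fun i : Fin u => (MvPolynomial.X i : MvPolynomial (Fin u) R) ^ 2)

/-- The class of the variable `z_i` in `B R u`. -/
def zvar (R : Type*) [CommRing R] (u : ℕ) (i : Fin u) : SqZeroAlg R u :=
  Ideal.Quotient.mk _ (MvPolynomial.X i)

/-- The square-free monomial `z_S = ∏_{i ∈ S} z_i`. -/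
def zmon (R : Type*) [CommRing R] (u : ℕ) (S : Finset (Fin u)) : SqZeroAlg R u :=
  ∏ i ∈ S, zvar R u i

/-- `y^{[k]} = Σ_{|S|=k} z_S`, the `k`-th elementary symmetric polynomial in the `z`'s,
indexed by an integer and declared to vanish in negative degrees. -/
def ysym (R : Type*) [CommRing R] (u : ℕ) (m : ℤ) : SqZeroAlg R u :=
  if 0 ≤ m then
    ∑ S ∈ Finset.powersetCard m.toNat (Finset.univ : Finset (Fin u)), zmon R u S
  else 0

/-! Since each `z_i` squares to zero, `y^{[|T|-|S|]} z_S` is the sum of the monomials `z_W` with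
`|W| = |T|` and `S ⊆ W`. Summing over `S ⊆ T̄` and exchanging the sums, the coefficient of `z_W`
is `Σ_{S ⊆ T̄ ∩ W} (-1)^{|S|}`, which vanishes unless `T̄ ∩ W = ∅`, i.e. unless `W = T`. -/

section InclusionExclusion

variable (R : Type*) [CommRing R] (u : ℕ)

lemma zvar_sq (i : Fin u) : zvar R u i ^ 2 = 0 := by
  rw [zvar, ← map_pow, Ideal.Quotient.eq_zero_iff_mem]
  exact Ideal.subset_span ⟨i, rfl⟩

lemma zmon_mul_zmon (A S : Finset (Fin u)) :
    zmon R u A * zmon R u S = if Disjoint A S then zmon R u (A ∪ S) else 0 := by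
  split_ifs with h
  · exact (prod_union h).symm
  · obtain ⟨i, hiA, hiS⟩ := not_disjoint_iff.mp h
    rw [zmon, zmon, ← mul_prod_erase _ _ hiA, ← mul_prod_erase _ _ hiS,
      mul_mul_mul_comm, ← sq, zvar_sq, zero_mul]

lemma ysym_sub_card_mul_zmon (k : ℕ) (S : Finset (Fin u)) :
    ysym R u ((k : ℤ) - (S.card : ℤ)) * zmon R u S =
      ∑ W ∈ powersetCard k univ with S ⊆ W, zmon R u W := by
  rw [ysym]
  split_ifs with hk
  · rw [show ((k : ℤ) - S.card).toNat = k - S.card by omega, sum_mul]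
    simp_rw [zmon_mul_zmon, sum_ite, sum_const_zero, add_zero]
    refine sum_bij' (fun A _ => A ∪ S) (fun W _ => W \ S) ?_ ?_ ?_ ?_ (fun _ _ => rfl)
    · simp only [mem_filter, mem_powersetCard, subset_univ, true_and]
      rintro A ⟨hcard, hdisj⟩
      exact ⟨by rw [card_union_of_disjoint hdisj, hcard]; omega, subset_union_right⟩
    · simp only [mem_filter, mem_powersetCard, subset_univ, true_and]
      rintro W ⟨hcard, hSW⟩
      exact ⟨by rw [card_sdiff_of_subset hSW, hcard], sdiff_disjoint⟩
    · intro A hA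
      exact union_sdiff_cancel_right (mem_filter.mp hA).2
    · intro W hW
      exact sdiff_union_of_subset (mem_filter.mp hW).2
  · rw [zero_mul, eq_comm]
    refine sum_eq_zero fun W hW => ?_
    simp only [mem_filter, mem_powersetCard] at hW
    have := card_le_card hW.2
    omega

end InclusionExclusion

lemma sum_powerset_neg_one_pow_card_eq_ite {α B : Type*} [DecidableEq α] [Ring B]
    (x : Finset α) : ∑ m ∈ x.powerset, (-1 : B) ^ m.card = if x = ∅ then 1 else 0 := by
  have h := congrArg (Int.cast : ℤ → B) (sum_powerset_neg_one_pow_card (x := x))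
  push_cast at h
  exact h

lemma sum_powerset_compl_subset_neg_one_pow {α B : Type*} [Fintype α] [DecidableEq α] [Ring B]
    {T W : Finset α} (hW : W.card = T.card) :
    ∑ S ∈ Tᶜ.powerset with S ⊆ W, (-1 : B) ^ S.card = if W = T then 1 else 0 := by
  have hfilter : (Tᶜ.powerset.filter fun S => S ⊆ W) = (Tᶜ ∩ W).powerset := by
    ext S
    simp only [mem_filter, mem_powerset, subset_inter_iff]
  have hempty : Tᶜ ∩ W = ∅ ↔ W = T := by
    rw [← disjoint_iff_inter_eq_empty, disjoint_compl_left_iff]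
    exact ⟨fun h => eq_of_subset_of_card_le h hW.ge, fun h => h.subset⟩
  rw [hfilter, sum_powerset_neg_one_pow_card_eq_ite]
  exact if_congr hempty rfl rfl

/-- **Inclusion–exclusion in `R[z₁,…,z_u]/(z₁²,…,z_u²)`**: for any `T ⊆ {1,…,u}` with
complement `T̄`, `z_T = Σ_{S ⊆ T̄} (−1)^{|S|} y^{[|T|−|S|]} · z_S`. -/
theorem statement6 (R : Type*) [CommRing R] (u : ℕ) (T : Finset (Fin u)) :
    zmon R u T =
      ∑ S ∈ Tᶜ.powerset,
        (-1 : SqZeroAlg R u) ^ S.card *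
          ysym R u ((T.card : ℤ) - (S.card : ℤ)) * zmon R u S := by
  calc zmon R u T
      = ∑ W ∈ powersetCard T.card univ, (if W = T then 1 else 0) * zmon R u W := by
        simp_rw [ite_mul, one_mul, zero_mul]
        rw [sum_ite_eq', if_pos (mem_powersetCard.mpr ⟨subset_univ _, rfl⟩)]
    _ = ∑ W ∈ powersetCard T.card univ, ∑ S ∈ Tᶜ.powerset with S ⊆ W,
          (-1 : SqZeroAlg R u) ^ S.card * zmon R u W := by
        refine sum_congr rfl fun W hW => ?_
        rw [← sum_mul, sum_powerset_compl_subset_neg_one_pow (mem_powersetCard.mp hW).2]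
    _ = ∑ S ∈ Tᶜ.powerset, ∑ W ∈ powersetCard T.card univ with S ⊆ W,
          (-1 : SqZeroAlg R u) ^ S.card * zmon R u W :=
        sum_comm' fun W S => by simp only [mem_filter]; tauto
    _ = _ := by
        refine sum_congr rfl fun S _ => ?_
        rw [mul_assoc, ysym_sub_card_mul_zmon, mul_sum]

end
end

section
/- For a prime p and u ≥ 0, let h ≥ 0 satisfy p^h − 1 ≤ u ≤ p^{h+1} − 2. Suppose Laurent polynomials P_i(s) ∈ ℤ_{≥0}[s^{±1}] for i ≥ 0 have nonnegative coefficients, P_i is supported on monomials s^j with j strictly between −u−p^{i+1}+2p^i−1 and −u+p^{i+1}−1, and (1+s^{−2})^u = Σ_{i≥0} P_i(s)·(1 + s^{−2} + s^{−4} + ⋯ + s^{−2p^i+2}). Then P_i = 0 for all i > h. -/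
/-!
The coefficients of `(1+s^{-2})^u` live on exponents in `[-2u, 0]`, and every summand on the
right has nonnegative coefficients, so nothing can cancel: a nonzero coefficient `f i j` of `P_i`
forces the whole block `j, j-2, …, j-2(p^i-1)` into `[-2u, 0]`, hence `p^i ≤ u+1`. For `i > h`,
however, `p^i ≥ p^{h+1} ≥ u+2`.
-/

open Finset

lemma mem_Icc_of_sum_ite_ne_zero {u : ℕ} {c : ℕ → ℕ} {j : ℤ}
    (h : (∑ m ∈ range (u + 1), if j = -(2 * (m : ℤ)) then c m else 0) ≠ 0) :
    j ∈ Set.Icc (-(2 * (u : ℤ))) 0 := by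
  obtain ⟨m, hm, hne⟩ := exists_ne_zero_of_sum_ne_zero h
  rw [mem_range] at hm
  split_ifs at hne with hj
  · exact ⟨by omega, by omega⟩
  · exact absurd rfl hne

lemma coe_le_tsum_sum_range_shift (N : ℕ → ℕ) (f : ℕ → ℤ → ℕ) {i t : ℕ} (ht : t < N i)
    (j : ℤ) :
    (f i j : ENNReal) ≤
      ∑' i', ∑ t' ∈ range (N i'), (f i' (j - 2 * t + 2 * (t' : ℤ)) : ENNReal) :=
  calc (f i j : ENNReal) = f i (j - 2 * t + 2 * (t : ℤ)) := by rw [sub_add_cancel]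
    _ ≤ ∑ t' ∈ range (N i), (f i (j - 2 * t + 2 * (t' : ℤ)) : ENNReal) :=
        single_le_sum (f := fun t' : ℕ ↦ (f i (j - 2 * t + 2 * (t' : ℤ)) : ENNReal))
          (fun _ _ ↦ zero_le) (mem_range.mpr ht)
    _ ≤ _ := ENNReal.le_tsum i

section SupportWidth

variable {u : ℕ} {c N : ℕ → ℕ} {f : ℕ → ℤ → ℕ}

lemma sub_two_mul_mem_Icc_of_ne_zero
    (hid : ∀ j : ℤ, ((∑ m ∈ range (u + 1), if j = -(2 * (m : ℤ)) then c m else 0 : ℕ) : ENNReal) =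
      ∑' i, ∑ t ∈ range (N i), (f i (j + 2 * (t : ℤ)) : ENNReal))
    {i t : ℕ} {j : ℤ} (hfj : f i j ≠ 0) (ht : t < N i) :
    j - 2 * t ∈ Set.Icc (-(2 * (u : ℤ))) 0 := by
  apply mem_Icc_of_sum_ite_ne_zero (c := c)
  intro h0
  have hle := coe_le_tsum_sum_range_shift N f ht j
  rw [← hid, h0, Nat.cast_zero, nonpos_iff_eq_zero, Nat.cast_eq_zero] at hle
  exact hfj hle

lemma le_add_one_of_ne_zero
    (hid : ∀ j : ℤ, ((∑ m ∈ range (u + 1), if j = -(2 * (m : ℤ)) then c m else 0 : ℕ) : ENNReal) =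
      ∑' i, ∑ t ∈ range (N i), (f i (j + 2 * (t : ℤ)) : ENNReal))
    {i : ℕ} {j : ℤ} (hfj : f i j ≠ 0) :
    N i ≤ u + 1 := by
  rcases Nat.eq_zero_or_pos (N i) with hN | hN
  · omega
  have hfirst := sub_two_mul_mem_Icc_of_ne_zero hid hfj hN
  have hlast := sub_two_mul_mem_Icc_of_ne_zero hid hfj (Nat.sub_one_lt_of_lt hN)
  simp only [Set.mem_Icc, Nat.cast_zero, Nat.cast_pred hN] at hfirst hlast
  omega

end SupportWidth

lemma add_two_le_pow_of_lt {p u h i : ℕ} (hp : 1 < p) (hu : u ≤ p ^ (h + 1) - 2) (hi : h < i) :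
    u + 2 ≤ p ^ i := by
  have hmono : p ^ (h + 1) ≤ p ^ i := Nat.pow_le_pow_right hp.le hi
  have htwo : 2 ≤ p ^ (h + 1) := hp.trans_le (Nat.le_self_pow (Nat.succ_ne_zero h) p)
  omega

theorem statement11_general (p u h : ℕ) (hp : p.Prime)
    (h2 : u ≤ p ^ (h + 1) - 2)
    (f : ℕ → ℤ → ℕ)
    (hid : ∀ j : ℤ,
      ((∑ m ∈ Finset.range (u + 1),
          if j = -(2 * (m : ℤ)) then u.choose m else 0 : ℕ) : ENNReal) =
        ∑' i : ℕ, ∑ t ∈ Finset.range (p ^ i), (f i (j + 2 * (t : ℤ)) : ENNReal)) :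
    ∀ i : ℕ, h < i → ∀ j : ℤ, f i j = 0 := by
  intro i hi j
  by_contra hfj
  have hnarrow : p ^ i ≤ u + 1 := le_add_one_of_ne_zero (N := (p ^ ·)) hid hfj
  have hwide : u + 2 ≤ p ^ i := add_two_le_pow_of_lt hp.one_lt h2 hi
  omega

/-- **Vanishing of the high Poincaré polynomials** (Remark 6.3 of the paper).
Let `p` be a prime, `u ≥ 0`, and `h` with `p^h − 1 ≤ u ≤ p^{h+1} − 2`.  Suppose
`f i : ℤ → ℕ` are the (nonnegative) coefficient functions of Laurent polynomials
`P_i(s) = Σ_j f i j · s^j`, each supported on exponents `j` with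
`−u−p^{i+1}+2p^i−1 < j < −u+p^{i+1}−1`, and satisfying
`(1+s^{−2})^u = Σ_{i≥0} P_i(s)·(1+s^{−2}+⋯+s^{−2p^i+2})`, i.e. coefficientwise (in
`ℝ≥0∞`, so that the infinite sum makes sense):
for every `j`, the coefficient of `s^j` of `(1+s^{−2})^u` equals
`Σ_i Σ_{t<p^i} f i (j+2t)`.  Then `P_i = 0` for all `i > h`. -/
theorem statement11 (p u h : ℕ) (hp : p.Prime)
    (h1 : p ^ h - 1 ≤ u) (h2 : u ≤ p ^ (h + 1) - 2)
    (f : ℕ → ℤ → ℕ)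
    (hsupp : ∀ i : ℕ, ∀ j : ℤ, f i j ≠ 0 →
      -(u : ℤ) - (p : ℤ) ^ (i + 1) + 2 * (p : ℤ) ^ i - 1 < j ∧
        j < -(u : ℤ) + (p : ℤ) ^ (i + 1) - 1)
    (hid : ∀ j : ℤ,
      ((∑ m ∈ Finset.range (u + 1),
          if j = -(2 * (m : ℤ)) then u.choose m else 0 : ℕ) : ENNReal) =
        ∑' i : ℕ, ∑ t ∈ Finset.range (p ^ i), (f i (j + 2 * (t : ℤ)) : ENNReal)) :
    ∀ i : ℕ, h < i → ∀ j : ℤ, f i j = 0 :=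
  statement11_general p u h hp h2 f hid
end

section
/- Let F be a field, d ≥ 2, and R = F[y]/(y^d) graded with y in negative degree. Every finite-dimensional graded R-module M with M ≅ M^∨ (graded dual, with degree negated) has a barcode satisfying: for each size 1 ≤ c ≤ d and each i, the number of bars of size c with barycentre −i equals the number of bars of size c with barycentre +i. -/
/-!
Duality pairs the degree `m` part of `M` perfectly with the degree `-m` part, and `y` is
self-adjoint for this pairing. Hence `y^k : M_m → M_{m-2kd₀}` and `y^k : M_{m'} → M_{-m}`, with
`m + m' = 2kd₀`, are adjoint to each other and have the same rank:
`rk(y^k M_m) = rk(y^k M_{2kd₀-m})`. Reflecting `m ↦ 2kd₀ - m` sends each of the four rank terms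
of `μ_c` at barycentre `-i` to a rank term of `μ_c` at barycentre `i`.
-/

open Module LinearMap

theorem LinearMap.finrank_range_eq_of_ker_eq {R V W X : Type*} [Ring R]
    [AddCommGroup V] [Module R V] [AddCommGroup W] [Module R W] [AddCommGroup X] [Module R X]
    {f : V →ₗ[R] W} {g : V →ₗ[R] X} (h : ker f = ker g) :
    finrank R (range f) = finrank R (range g) :=
  (f.quotKerEquivRange.symm ≪≫ₗ Submodule.quotEquivOfEq _ _ h ≪≫ₗ g.quotKerEquivRange).finrank_eq

theorem LinearMap.finrank_range_flip {K V₁ V₂ : Type*} [Field K]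
    [AddCommGroup V₁] [Module K V₁] [AddCommGroup V₂] [Module K V₂] [FiniteDimensional K V₂]
    (B : V₁ →ₗ[K] V₂ →ₗ[K] K) :
    finrank K (range B.flip) = finrank K (range B) := by
  have hflip : B.flip = B.dualMap ∘ₗ (evalEquiv K V₂).toLinearMap := rfl
  rw [hflip, range_comp_of_range_eq_top _ (LinearEquiv.range _),
    finrank_range_dualMap_eq_finrank_range]

theorem LinearEquiv.nondegenerate_toLinearMap_of_dual {K V : Type*} [Field K]
    [AddCommGroup V] [Module K V] (e : V ≃ₗ[K] Dual K V) :
    (e : V →ₗ[K] Dual K V).Nondegenerate := by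
  refine ⟨separatingLeft_iff_ker_eq_bot.mpr e.ker, fun z hz => ?_⟩
  exact eval_separatingLeft (K := K) z fun φ => by simpa using hz (e.symm φ)

theorem LinearMap.IsAdjointPair.pow {R M N : Type*} [CommSemiring R]
    [AddCommMonoid M] [Module R M] [AddCommMonoid N] [Module R N]
    {B : M →ₗ[R] M →ₗ[R] N} {f : Module.End R M} (hf : IsAdjointPair B B f f) (k : ℕ) :
    IsAdjointPair B B ⇑(f ^ k) ⇑(f ^ k) := by
  induction k with
  | zero => exact isAdjointPair_one
  | succ k ih => simpa only [← pow_succ, ← pow_succ'] using ih.mul hf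

section Graded

variable {R M : Type*} [CommSemiring R] [AddCommMonoid M] [Module R M]
  (ℳ : ℤ → Submodule R M)

theorem Submodule.map_pow_le_of_map_le {f : Module.End R M} {δ : ℤ}
    (hf : ∀ n, (ℳ n).map f ≤ ℳ (n - δ)) (k : ℕ) (n : ℤ) :
    (ℳ n).map (f ^ k) ≤ ℳ (n - k * δ) := by
  induction k with
  | zero => simp [Module.End.one_eq_id]
  | succ k ih =>
    rw [pow_succ', Module.End.mul_eq_comp, Submodule.map_comp]
    calc ((ℳ n).map (f ^ k)).map f ≤ (ℳ (n - k * δ)).map f := Submodule.map_mono ih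
      _ ≤ ℳ (n - k * δ - δ) := hf _
      _ = ℳ (n - (k + 1 : ℕ) * δ) := by push_cast; ring_nf

def IsGradedPairing {N : Type*} [AddCommMonoid N] [Module R N] (B : M →ₗ[R] M →ₗ[R] N) : Prop :=
  ∀ (n : ℤ) (x : M), x ∈ ℳ n → ∀ (m : ℤ) (z : M), z ∈ ℳ m → m ≠ -n → B x z = 0

variable {ℳ} {N : Type*} [AddCommMonoid N] [Module R N] {B : M →ₗ[R] M →ₗ[R] N}

theorem IsGradedPairing.flip (hB : IsGradedPairing ℳ B) : IsGradedPairing ℳ B.flip :=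
  fun n x hx m z hz hnm => hB m z hz n x hx (by omega)

variable [DirectSum.Decomposition ℳ]

theorem IsGradedPairing.eq_zero_of_forall_mem_neg (hB : IsGradedPairing ℳ B)
    (hsep : B.SeparatingLeft) {p : ℤ} {x : M} (hx : x ∈ ℳ p)
    (h : ∀ z ∈ ℳ (-p), B x z = 0) : x = 0 := by
  refine hsep x fun z => congrArg (· z) (?_ : B x = 0)
  refine DirectSum.decompose_lhom_ext ℳ fun q => LinearMap.ext fun ⟨z, hz⟩ => ?_
  by_cases hq : q = -p
  · subst hq; exact h z hz
  · exact hB p x hx q z hz hq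

end Graded

section FiniteDimensional

variable {K M : Type*} [Field K] [AddCommGroup M] [Module K M] [FiniteDimensional K M]
  {ℳ : ℤ → Submodule K M} [DirectSum.Decomposition ℳ] {B : M →ₗ[K] M →ₗ[K] K}

theorem IsGradedPairing.finrank_map_eq_of_add_eq (hB : IsGradedPairing ℳ B)
    (hnd : B.Nondegenerate) {f : Module.End K M} (hadj : IsAdjointPair B B f f) {δ : ℤ}
    (hf : ∀ n, (ℳ n).map f ≤ ℳ (n - δ)) {m m' : ℤ} (hmm' : m + m' = δ) :
    finrank K ((ℳ m).map f) = finrank K ((ℳ m').map f) := by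
  let P := B.compl₁₂ (f ∘ₗ (ℳ m).subtype) (ℳ m').subtype
  have hker : ker P = ker (f ∘ₗ (ℳ m).subtype) := by
    ext x
    refine ⟨fun hx => ?_, fun hx => LinearMap.ext fun z => by simp [P, mem_ker.mp hx]⟩
    refine hB.eq_zero_of_forall_mem_neg hnd.1 (hf m ⟨x, x.2, rfl⟩) fun z hz => ?_
    exact congrArg (· ⟨z, by convert hz using 2; omega⟩) (mem_ker.mp hx)
  have hker_flip : ker P.flip = ker (f ∘ₗ (ℳ m').subtype) := by
    ext z
    refine ⟨fun hz => ?_, fun hz => LinearMap.ext fun x => by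
      have hfz : f z = 0 := mem_ker.mp hz
      simp [P, hadj x z, hfz]⟩
    have hfz : f z ∈ ℳ (-m) := by convert hf m' ⟨z, z.2, rfl⟩ using 2; omega
    refine hB.flip.eq_zero_of_forall_mem_neg (flip_separatingLeft.mpr hnd.2) hfz fun x hx => ?_
    have := congrArg (· ⟨x, by simpa using hx⟩) (mem_ker.mp hz)
    simpa [P, hadj x z] using this
  calc finrank K ((ℳ m).map f) = finrank K (range (f ∘ₗ (ℳ m).subtype)) := by
        rw [range_comp, Submodule.range_subtype]
    _ = finrank K (range P) := finrank_range_eq_of_ker_eq hker.symm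
    _ = finrank K (range P.flip) := (finrank_range_flip P).symm
    _ = finrank K (range (f ∘ₗ (ℳ m').subtype)) := finrank_range_eq_of_ker_eq hker_flip
    _ = finrank K ((ℳ m').map f) := by rw [range_comp, Submodule.range_subtype]

end FiniteDimensional

theorem statement12_general (F : Type*) [Field F] (d d₀ : ℕ)
    (M : Type*) [AddCommGroup M] [Module F M] [FiniteDimensional F M]
    (y : M →ₗ[F] M)
    (ℳ : ℤ → Submodule F M) [DirectSum.Decomposition ℳ]
    (hgr : ∀ n : ℤ, (ℳ n).map y ≤ ℳ (n - 2 * d₀))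
    (e : M ≃ₗ[F] Module.Dual F M)
    (he : ∀ x z : M, e (y x) z = e x (y z))
    (hegr : ∀ (n : ℤ) (x : M), x ∈ ℳ n → ∀ (m : ℤ) (z : M), z ∈ ℳ m → m ≠ -n →
      e x z = 0) :
    ∀ c : ℕ, 1 ≤ c → c ≤ d → ∀ i : ℤ,
      (fun m : ℤ =>
          (Module.finrank F ((ℳ m).map (y ^ (c - 1))) : ℤ)
            - (Module.finrank F ((ℳ (m + 2 * d₀)).map (y ^ c)) : ℤ)
            - (Module.finrank F ((ℳ m).map (y ^ c)) : ℤ)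
            + (Module.finrank F ((ℳ (m + 2 * d₀)).map (y ^ (c + 1))) : ℤ))
          (-i + ((c : ℤ) - 1) * d₀) =
      (fun m : ℤ =>
          (Module.finrank F ((ℳ m).map (y ^ (c - 1))) : ℤ)
            - (Module.finrank F ((ℳ (m + 2 * d₀)).map (y ^ c)) : ℤ)
            - (Module.finrank F ((ℳ m).map (y ^ c)) : ℤ)
            + (Module.finrank F ((ℳ (m + 2 * d₀)).map (y ^ (c + 1))) : ℤ))
          (i + ((c : ℤ) - 1) * d₀) := by
  intro c hc _ i
  have sym (k : ℕ) (m m' : ℤ) (h : m + m' = k * (2 * d₀)) :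
      finrank F ((ℳ m).map (y ^ k)) = finrank F ((ℳ m').map (y ^ k)) :=
    IsGradedPairing.finrank_map_eq_of_add_eq (B := e) (ℳ := ℳ) hegr
      e.nondegenerate_toLinearMap_of_dual
      (IsAdjointPair.pow he k) (Submodule.map_pow_le_of_map_le ℳ hgr k) h
  have hc' : ((c - 1 : ℕ) : ℤ) = c - 1 := by omega
  dsimp only
  rw [sym (c - 1) _ (i + (c - 1) * d₀) (by rw [hc']; ring),
    sym c (-i + (c - 1) * d₀ + 2 * d₀) (i + (c - 1) * d₀) (by ring),
    sym c (-i + (c - 1) * d₀) (i + (c - 1) * d₀ + 2 * d₀) (by ring),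
    sym (c + 1) _ (i + (c - 1) * d₀ + 2 * d₀) (by push_cast; ring)]
  ring

/-- **Barcode symmetry of graded self-dual modules over `F[y]/(y^d)`.**
Let `F` be a field, `d ≥ 2`, and let `M` be a finite-dimensional `F`-vector space with
a grading `ℳ : ℤ → Submodule F M` (a direct sum decomposition) and an operator
`y : M → M` of degree `−2d₀` with `y^d = 0`, making `M` a graded `F[y]/(y^d)`-module.
Assume `M` is isomorphic to its graded dual: there is `e : M ≃ M^∨` with
`e(yx)(z) = e(x)(yz)` and `e` pairing `ℳ n` only against `ℳ (−n)`.
For `1 ≤ c ≤ d`, the number of bars of size `c` with top degree `m` in the barcode of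
`M` is `μ_c(m) := rk(y^{c−1}ℳ_m) − rk(y^c ℳ_{m+2d₀}) − rk(y^c ℳ_m) + rk(y^{c+1} ℳ_{m+2d₀})`,
and a bar `(m,c)` has barycentre `m − (c−1)d₀`.  Then for every size `c` and every
`i : ℤ`, there are as many bars of size `c` with barycentre `−i` as with barycentre `i`,
i.e. `μ_c(−i + (c−1)d₀) = μ_c(i + (c−1)d₀)`. -/
theorem statement12 (F : Type*) [Field F] (d d₀ : ℕ) (hd : 2 ≤ d) (hd₀ : 1 ≤ d₀)
    (M : Type*) [AddCommGroup M] [Module F M] [FiniteDimensional F M]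
    (y : M →ₗ[F] M) (hy : y ^ d = 0)
    (ℳ : ℤ → Submodule F M) [DirectSum.Decomposition ℳ]
    (hgr : ∀ n : ℤ, (ℳ n).map y ≤ ℳ (n - 2 * d₀))
    (e : M ≃ₗ[F] Module.Dual F M)
    (he : ∀ x z : M, e (y x) z = e x (y z))
    (hegr : ∀ (n : ℤ) (x : M), x ∈ ℳ n → ∀ (m : ℤ) (z : M), z ∈ ℳ m → m ≠ -n →
      e x z = 0) :
    ∀ c : ℕ, 1 ≤ c → c ≤ d → ∀ i : ℤ,
      (fun m : ℤ =>
          (Module.finrank F ((ℳ m).map (y ^ (c - 1))) : ℤ)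
            - (Module.finrank F ((ℳ (m + 2 * d₀)).map (y ^ c)) : ℤ)
            - (Module.finrank F ((ℳ m).map (y ^ c)) : ℤ)
            + (Module.finrank F ((ℳ (m + 2 * d₀)).map (y ^ (c + 1))) : ℤ))
          (-i + ((c : ℤ) - 1) * d₀) =
      (fun m : ℤ =>
          (Module.finrank F ((ℳ m).map (y ^ (c - 1))) : ℤ)
            - (Module.finrank F ((ℳ (m + 2 * d₀)).map (y ^ c)) : ℤ)
            - (Module.finrank F ((ℳ m).map (y ^ c)) : ℤ)
            + (Module.finrank F ((ℳ (m + 2 * d₀)).map (y ^ (c + 1))) : ℤ))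
          (i + ((c : ℤ) - 1) * d₀) :=
  statement12_general F d d₀ M y ℳ hgr e he hegr
end

section
/- Let A be a weighted F-algebra concentrated in non-positive weights, M a tame A-module, and suppose there exists a monomial a = y₀^{i₀}⋯y_h^{i_h} of weight −2k in A = F[y₀,...]/(y₀^{d₁},...) with 0 ≤ i_j < d_{j+1}. If ν ∈ M has weight at most −k and satisfies y_j^{d_{j+1}−i_j} ν = 0 for all 0 ≤ j ≤ h, then ν lies in the image of multiplication by a on M. -/
open Finset

noncomputable section

/-- The weighted truncated polynomial algebra
`𝒜(d) = F[𝔶₀,𝔶₁,…]/(𝔶₀^{d₁}, 𝔶₁^{d₂}, …)`, where `𝔶ᵢ` is the class of the variable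
`X i` and carries weight `−2·D_i` with `D_i = d₀d₁⋯d_i`. -/
abbrev TruncAlg (F : Type) [Field F] (d : ℕ → ℕ) : Type :=
  MvPolynomial ℕ F ⧸
    Ideal.span (Set.range fun i : ℕ => (MvPolynomial.X i : MvPolynomial ℕ F) ^ d (i + 1))

/-- The generator `𝔶ᵢ` of `𝒜(d)`. -/
def yvar (F : Type) [Field F] (d : ℕ → ℕ) (i : ℕ) : TruncAlg F d :=
  Ideal.Quotient.mk _ (MvPolynomial.X i)

/-- `D_i = d₀·d₁·⋯·d_i`. -/
def Dprod (d : ℕ → ℕ) (i : ℕ) : ℕ := ∏ j ∈ Finset.range (i + 1), d j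

/-- The weight-`n` component of `𝒜(d)`: the `F`-span of (classes of) monomials
`∏ 𝔶ᵢ^{aᵢ}` of total weight `Σᵢ aᵢ·(−2Dᵢ) = n`. -/
def algGrading (F : Type) [Field F] (d : ℕ → ℕ) (n : ℤ) : Submodule F (TruncAlg F d) :=
  Submodule.span F ((fun x => (Ideal.Quotient.mk _ x : TruncAlg F d)) ''
    {x : MvPolynomial ℕ F | ∃ m : ℕ →₀ ℕ,
      x = MvPolynomial.monomial m 1 ∧
      (m.sum fun i a => -(2 * (Dprod d i : ℤ) * (a : ℤ))) = n})

/-- **Tameness** (Definition 6.4 of the paper) of a weighted `𝒜(d)`-module `M` with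
weight decomposition `ℳ`:
(i) `M` is finite dimensional over `F`;
(ii) `M ≅ M^∨` as weighted `𝒜(d)`-modules (an `F`-linear isomorphism onto the dual,
intertwining the action and pairing weight `n` only against weight `−n`);
(iii) for every `k ≥ 0` there is a free `𝒜(d)`-module on finitely many generators of
weights `≥ k`, and an `𝒜(d)`-linear map to `M` (given by elements `xg i ∈ ℳ (wgen i)`)
which is surjective onto every weight component of weight `≥ k` and injective on weight
components of weights `≥ −k`. -/
def Tame (F : Type) [Field F] (d : ℕ → ℕ) (M : Type) [AddCommGroup M] [Module F M]
    [Module (TruncAlg F d) M] (ℳ : ℤ → Submodule F M) : Prop :=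
  FiniteDimensional F M ∧
  (∃ e : M ≃ₗ[F] Module.Dual F M,
    (∀ (a : TruncAlg F d) (x z : M), e (a • x) z = e x (a • z)) ∧
    (∀ (n : ℤ) (x : M), x ∈ ℳ n → ∀ (m : ℤ) (z : M), z ∈ ℳ m → m ≠ -n → e x z = 0)) ∧
  (∀ k : ℕ, ∃ (N : ℕ) (wgen : Fin N → ℤ) (xg : Fin N → M),
    (∀ i, (k : ℤ) ≤ wgen i) ∧ (∀ i, xg i ∈ ℳ (wgen i)) ∧
    (∀ n : ℤ, (k : ℤ) ≤ n →
      ℳ n ≤ ⨆ i : Fin N,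
        Submodule.span F {z : M | ∃ a ∈ algGrading F d (n - wgen i), z = a • xg i}) ∧
    (∀ n : ℤ, -(k : ℤ) ≤ n → ∀ a : Fin N → TruncAlg F d,
      (∀ i, a i ∈ algGrading F d (n - wgen i)) → (∑ i, a i • xg i) = 0 → ∀ i, a i = 0))

/-!
Self-duality makes multiplication by `𝔞` self-adjoint, so `ν` lies in its image as soon as `ν`
pairs to zero with every `z` killed by `𝔞`. Only the weight `−w` component of `z` pairs with `ν`,
and it is again killed by `𝔞`. Writing it as `∑ bᵢ xᵢ` through the free cover at level `−w`,
injectivity in weight `−w − 2k ≥ w` forces `𝔞 bᵢ = 0`. The annihilator of the monomial `𝔞` is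
generated by the `𝔶ⱼ^{d_{j+1} − i_j}`, which kill `ν`, so `⟨z, ν⟩ = ∑ ⟨xᵢ, bᵢ ν⟩ = 0`.
-/

theorem MvPolynomial.mem_span_monomial_tsub_of_monomial_mul_mem {σ R ι : Type*}
    [CommSemiring R] {f : ι → σ →₀ ℕ} {s : σ →₀ ℕ} {p : MvPolynomial σ R}
    (hp : monomial s 1 * p ∈ Ideal.span (Set.range fun i => monomial (f i) (1 : R))) :
    p ∈ Ideal.span (Set.range fun i => monomial (f i - s) (1 : R)) := by
  have range_eq (g : ι → σ →₀ ℕ) : (Set.range fun i => monomial (g i) (1 : R)) =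
      (fun t => monomial t 1) '' Set.range g :=
    Set.range_comp (fun t => monomial t (1 : R)) g
  rw [range_eq, mem_ideal_span_monomial_image] at hp ⊢
  intro m hm
  obtain ⟨_, ⟨i, rfl⟩, hi⟩ := hp (s + m) (by
    rwa [mem_support_iff, coeff_monomial_mul, one_mul, ← mem_support_iff])
  exact ⟨_, ⟨i, rfl⟩, tsub_le_iff_left.mpr hi⟩

section Duality

variable {K V : Type*} [Field K] [AddCommGroup V] [Module K V]

theorem mem_range_of_forall_ker_apply_eq_zero (T : V →ₗ[K] V) (e : V ≃ₗ[K] Module.Dual K V)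
    (he : ∀ x z, e (T x) z = e x (T z)) {v : V} (hv : ∀ z, T z = 0 → e z v = 0) :
    v ∈ LinearMap.range T := by
  refine (Subspace.forall_mem_dualAnnihilator_apply_eq_zero_iff _ v).mp fun φ hφ => ?_
  have hTφ : T (e.symm φ) = 0 := e.injective <| by
    ext x
    rw [he, e.apply_symm_apply, map_zero, LinearMap.zero_apply]
    exact (Submodule.mem_dualAnnihilator φ).mp hφ _ ⟨x, rfl⟩
  simpa using hv _ hTφ

theorem apply_eq_zero_of_mem_smul_top {R : Type*} [CommSemiring R] [Module R V]
    (e : V →ₗ[K] Module.Dual K V) (he : ∀ (r : R) x y, e (r • x) y = e x (r • y))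
    {I : Ideal R} {ν : V} (hν : I ≤ (R ∙ ν).annihilator) {z : V}
    (hz : z ∈ I • (⊤ : Submodule R V)) : e z ν = 0 :=
  Submodule.smul_induction_on hz
    (fun r hr x _ => by
      rw [he, (Submodule.mem_annihilator_span_singleton _ _).mp (hν hr), map_zero])
    fun x y hx hy => by rw [map_add, LinearMap.add_apply, hx, hy, add_zero]

theorem apply_eq_apply_decompose_neg {ι : Type*} [DecidableEq ι] [InvolutiveNeg ι]
    (ℳ : ι → Submodule K V) [DirectSum.Decomposition ℳ] (e : V →ₗ[K] Module.Dual K V)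
    (he : ∀ n x, x ∈ ℳ n → ∀ m y, y ∈ ℳ m → m ≠ -n → e x y = 0)
    {ν : V} {w : ι} (hν : ν ∈ ℳ w) (z : V) :
    e z ν = e (DirectSum.decompose ℳ z (-w)) ν := by
  classical
  conv_lhs => rw [← DirectSum.sum_support_decompose ℳ z]
  rw [map_sum, LinearMap.sum_apply]
  refine Finset.sum_eq_single (-w) (fun n _ hn => ?_) fun hw => ?_
  · exact he n _ (SetLike.coe_mem _) w ν hν fun h => hn (by rw [h, neg_neg])
  · rw [DFinsupp.notMem_support_iff.mp hw, ZeroMemClass.coe_zero, map_zero,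
      LinearMap.zero_apply]

end Duality

theorem map_decompose_eq_zero {ι R M : Type*} [DecidableEq ι] [Add ι] [IsRightCancelAdd ι]
    [Semiring R] [AddCommMonoid M] [Module R M] (ℳ : ι → Submodule R M)
    [DirectSum.Decomposition ℳ] (T : M →+ M) {c : ι}
    (hT : ∀ n x, x ∈ ℳ n → T x ∈ ℳ (n + c)) {z : M} (hz : T z = 0) (n : ι) :
    T (DirectSum.decompose ℳ z n) = 0 := by
  classical
  have hcomp : (DirectSum.decompose ℳ (T z) (n + c) : M) = T (DirectSum.decompose ℳ z n) := by
    conv_lhs => rw [← DirectSum.sum_support_decompose ℳ z]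
    rw [map_sum, DirectSum.decompose_sum, DFinsupp.finsetSum_apply,
      AddSubmonoidClass.coe_finsetSum]
    refine (Finset.sum_eq_single n (fun m _ hm => ?_) fun hn => ?_).trans
      (DirectSum.decompose_of_mem_same ℳ (hT _ _ (SetLike.coe_mem _)))
    · exact DirectSum.decompose_of_mem_ne ℳ (hT _ _ (SetLike.coe_mem _))
        fun h => hm (add_right_cancel h)
    · rw [DFinsupp.notMem_support_iff.mp hn, ZeroMemClass.coe_zero, map_zero,
        DirectSum.decompose_zero, DirectSum.zero_apply, ZeroMemClass.coe_zero]
  rw [← hcomp, hz, DirectSum.decompose_zero, DirectSum.zero_apply, ZeroMemClass.coe_zero]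

theorem exists_sum_smul_of_mem_iSup_span {R A M ι : Type*} [CommSemiring R] [Semiring A]
    [Algebra R A] [AddCommMonoid M] [Module R M] [Module A M] [IsScalarTower R A M]
    [Fintype ι] (S : ι → Submodule R A) (x : ι → M) {z : M}
    (hz : z ∈ ⨆ i, Submodule.span R {t | ∃ b ∈ S i, t = b • x i}) :
    ∃ b : ι → A, (∀ i, b i ∈ S i) ∧ z = ∑ i, b i • x i := by
  have hspan (i : ι) : Submodule.span R {t | ∃ b ∈ S i, t = b • x i} =
      (S i).map ((LinearMap.id : A →ₗ[R] A).smulRight (x i)) := by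
    rw [← Submodule.span_eq (S i), Submodule.map_span, Submodule.span_eq]
    congr 1
    ext t
    simp [eq_comm]
  simp only [hspan] at hz
  obtain ⟨f, hf, rfl⟩ := (Submodule.mem_iSup_iff_exists_finsupp _ _).mp hz
  choose b hbS hb using fun i => Submodule.mem_map.mp (hf i)
  refine ⟨b, hbS, ?_⟩
  rw [Finsupp.sum_fintype _ _ fun _ => rfl]
  exact Finset.sum_congr rfl fun i _ => (hb i).symm

section TruncAlg

variable {F : Type} [Field F] {d : ℕ → ℕ}

theorem mk_monomial_mem_algGrading (m : ℕ →₀ ℕ) :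
    (Ideal.Quotient.mk _ (MvPolynomial.monomial m 1) : TruncAlg F d) ∈
      algGrading F d (m.sum fun i a => -(2 * (Dprod d i : ℤ) * (a : ℤ))) :=
  Submodule.subset_span ⟨_, ⟨m, rfl, rfl⟩, rfl⟩

theorem mul_mem_algGrading {a b : TruncAlg F d} {m n : ℤ}
    (ha : a ∈ algGrading F d m) (hb : b ∈ algGrading F d n) :
    a * b ∈ algGrading F d (m + n) := by
  induction ha using Submodule.span_induction with
  | mem x hx =>
    obtain ⟨_, ⟨s, rfl, rfl⟩, rfl⟩ := hx
    induction hb using Submodule.span_induction with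
    | mem y hy =>
      obtain ⟨_, ⟨t, rfl, rfl⟩, rfl⟩ := hy
      rw [← map_mul, MvPolynomial.monomial_mul, one_mul, ← Finsupp.sum_add_index'
        (fun _ => by simp) fun _ _ _ => by push_cast; ring]
      exact mk_monomial_mem_algGrading _
    | zero => simp
    | add y z _ _ hy hz => rw [mul_add]; exact add_mem hy hz
    | smul r y _ hy => rw [mul_smul_comm]; exact Submodule.smul_mem _ r hy
  | zero => simp
  | add x y _ _ hx hy => rw [add_mul]; exact add_mem hx hy
  | smul r x _ hx => rw [smul_mul_assoc]; exact Submodule.smul_mem _ r hx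

theorem yvar_pow_eq_mk_monomial (i n : ℕ) :
    yvar F d i ^ n = Ideal.Quotient.mk _ (MvPolynomial.monomial (Finsupp.single i n) 1) := by
  rw [← MvPolynomial.X_pow_eq_monomial, map_pow]
  rfl

theorem yvar_pow_eq_zero (i : ℕ) : yvar F d i ^ d (i + 1) = 0 := by
  rw [yvar, ← map_pow, Ideal.Quotient.eq_zero_iff_mem]
  exact Ideal.subset_span ⟨i, rfl⟩

theorem prod_yvar_pow (s : Finset ℕ) (e : ℕ → ℕ) :
    ∏ j ∈ s, yvar F d j ^ e j =
      Ideal.Quotient.mk _ (MvPolynomial.monomial (∑ j ∈ s, Finsupp.single j (e j)) 1) := by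
  simp only [yvar_pow_eq_mk_monomial, MvPolynomial.monomial_sum_one, map_prod]

theorem prod_yvar_pow_mem_algGrading (s : Finset ℕ) (e : ℕ → ℕ) :
    ∏ j ∈ s, yvar F d j ^ e j ∈ algGrading F d (-(2 * ∑ j ∈ s, (Dprod d j * e j : ℕ))) := by
  rw [prod_yvar_pow]
  convert mk_monomial_mem_algGrading _ using 1
  rw [← Finsupp.sum_finsetSum_index (fun _ => by simp) fun _ _ _ => by push_cast; ring]
  simp [Finset.mul_sum, mul_assoc]

theorem annihilator_span_mk_monomial_le (s : ℕ →₀ ℕ) :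
    (TruncAlg F d ∙ (Ideal.Quotient.mk _ (MvPolynomial.monomial s 1) : TruncAlg F d)).annihilator
      ≤ Ideal.span (Set.range fun i => yvar F d i ^ (d (i + 1) - s i)) := by
  intro b hb
  obtain ⟨p, rfl⟩ := Ideal.Quotient.mk_surjective b
  rw [Submodule.mem_annihilator_span_singleton, smul_eq_mul, ← map_mul, mul_comm,
    Ideal.Quotient.eq_zero_iff_mem] at hb
  simp only [MvPolynomial.X_pow_eq_monomial] at hb
  have hp := Ideal.mem_map_of_mem (Ideal.Quotient.mk _ : MvPolynomial ℕ F →+* TruncAlg F d)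
    (MvPolynomial.mem_span_monomial_tsub_of_monomial_mul_mem hb)
  rw [Ideal.map_span, ← Set.range_comp] at hp
  refine Ideal.span_le.mpr ?_ hp
  rintro _ ⟨i, rfl⟩
  have htsub : Finsupp.single i (d (i + 1)) - s = Finsupp.single i (d (i + 1) - s i) := by
    ext j
    simp only [Finsupp.coe_tsub, Pi.sub_apply, Finsupp.single_apply]
    split_ifs with hij <;> simp [hij]
  simp only [Function.comp_apply, htsub, ← yvar_pow_eq_mk_monomial]
  exact Ideal.subset_span ⟨i, rfl⟩

theorem annihilator_span_prod_yvar_pow_le (s : Finset ℕ) (e : ℕ → ℕ) :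
    (TruncAlg F d ∙ ∏ j ∈ s, yvar F d j ^ e j).annihilator
      ≤ Ideal.span ((fun j => yvar F d j ^ (d (j + 1) - e j)) '' s) := by
  rw [prod_yvar_pow]
  refine (annihilator_span_mk_monomial_le _).trans (Ideal.span_le.mpr ?_)
  rintro _ ⟨i, rfl⟩
  by_cases hi : i ∈ s
  · simp only [Finsupp.finsetSum_apply, Finsupp.single_apply, Finset.sum_ite_eq', if_pos hi]
    exact Ideal.subset_span ⟨i, hi, rfl⟩
  · simp [Finsupp.finsetSum_apply, Finsupp.single_apply, hi, yvar_pow_eq_zero]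

theorem Tame.mem_annihilator_smul_top {M : Type} [AddCommGroup M] [Module F M]
    [Module (TruncAlg F d) M] [IsScalarTower F (TruncAlg F d) M] {ℳ : ℤ → Submodule F M}
    (htame : Tame F d M ℳ) {n c : ℤ} (hn : 0 ≤ n) (hc : -n ≤ n + c) {a : TruncAlg F d}
    (ha : a ∈ algGrading F d c) {z : M} (hz : z ∈ ℳ n) (haz : a • z = 0) :
    z ∈ (TruncAlg F d ∙ a).annihilator • (⊤ : Submodule (TruncAlg F d) M) := by
  lift n to ℕ using hn
  obtain ⟨N, wgen, xg, -, -, hsurj, hinj⟩ := htame.2.2 n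
  obtain ⟨b, hb, rfl⟩ := exists_sum_smul_of_mem_iSup_span _ xg (hsurj n le_rfl hz)
  have hab : ∀ i, a * b i = 0 := by
    refine hinj (n + c) hc _ (fun i => ?_) ?_
    · convert mul_mem_algGrading ha (hb i) using 2
      ring
    · simpa only [mul_smul, ← Finset.smul_sum] using haz
  refine Submodule.sum_mem _ fun i _ => Submodule.smul_mem_smul ?_ trivial
  rw [Submodule.mem_annihilator_span_singleton, smul_eq_mul, mul_comm, hab i]

end TruncAlg

theorem statement15_general (F : Type) [Field F] (d : ℕ → ℕ)
    (M : Type) [AddCommGroup M] [Module F M] [Module (TruncAlg F d) M]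
    [IsScalarTower F (TruncAlg F d) M]
    (ℳ : ℤ → Submodule F M) [DirectSum.Decomposition ℳ]
    (hgr : ∀ (k n : ℤ) (a : TruncAlg F d) (x : M),
      a ∈ algGrading F d k → x ∈ ℳ n → a • x ∈ ℳ (n + k))
    (htame : Tame F d M ℳ)
    (h : ℕ) (idx : ℕ → ℕ)
    (k : ℕ) (hk : k = ∑ j ∈ Finset.range (h + 1), Dprod d j * idx j)
    (ν : M) (w : ℤ) (hw : w ≤ -(k : ℤ)) (hν : ν ∈ ℳ w)
    (hkill : ∀ j ≤ h, (yvar F d j) ^ (d (j + 1) - idx j) • ν = 0) :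
    ∃ μ : M, (∏ j ∈ Finset.range (h + 1), (yvar F d j) ^ idx j) • μ = ν := by
  set a := ∏ j ∈ Finset.range (h + 1), (yvar F d j) ^ idx j
  have ha : a ∈ algGrading F d (-(2 * k)) := by
    simpa only [hk, Nat.cast_sum] using prod_yvar_pow_mem_algGrading (F := F) (d := d) _ idx
  have hann : (TruncAlg F d ∙ a).annihilator ≤ (TruncAlg F d ∙ ν).annihilator := by
    refine (annihilator_span_prod_yvar_pow_le _ _).trans (Ideal.span_le.mpr ?_)
    rintro _ ⟨j, hj, rfl⟩
    exact (Submodule.mem_annihilator_span_singleton _ _).mpr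
      (hkill j (Nat.lt_succ_iff.mp (Finset.mem_range.mp hj)))
  obtain ⟨e, he_smul, he_orth⟩ := htame.2.1
  suffices hmem : ν ∈ LinearMap.range (DistribSMul.toLinearMap F M a) from hmem
  refine mem_range_of_forall_ker_apply_eq_zero _ e (he_smul a) fun z hz => ?_
  have haz : a • (DirectSum.decompose ℳ z (-w) : M) = 0 :=
    map_decompose_eq_zero ℳ (DistribSMul.toAddMonoidHom M a)
      (fun n x hx => hgr _ n a x ha hx) hz (-w)
  exact (apply_eq_apply_decompose_neg ℳ e.toLinearMap he_orth hν z).trans <|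
    apply_eq_zero_of_mem_smul_top e.toLinearMap he_smul hann
      (htame.mem_annihilator_smul_top (by omega) (by omega) ha (SetLike.coe_mem _) haz)

/-- **Divisibility by monomials in a tame module** (Lemma 6.13 of the paper).
Let `𝒜(d)` be the weighted truncated polynomial algebra, `M` a tame weighted
`𝒜(d)`-module, and let `𝔞 = 𝔶₀^{i₀}⋯𝔶_h^{i_h}` be a monomial with `i_j < d_{j+1}`, of
weight `−2k` where `k = Σ_j D_j·i_j`.  If `ν ∈ M` is homogeneous of weight at most `−k`
and `𝔶_j^{d_{j+1}−i_j}·ν = 0` for all `0 ≤ j ≤ h`, then `ν` is in the image of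
multiplication by `𝔞`. -/
theorem statement15 (F : Type) [Field F] (d : ℕ → ℕ)
    (hd0 : 1 ≤ d 0) (hdi : ∀ i : ℕ, 1 ≤ i → 2 ≤ d i)
    (M : Type) [AddCommGroup M] [Module F M] [Module (TruncAlg F d) M]
    [IsScalarTower F (TruncAlg F d) M]
    (ℳ : ℤ → Submodule F M) [DirectSum.Decomposition ℳ]
    (hgr : ∀ (k n : ℤ) (a : TruncAlg F d) (x : M),
      a ∈ algGrading F d k → x ∈ ℳ n → a • x ∈ ℳ (n + k))
    (htame : Tame F d M ℳ)
    (h : ℕ) (idx : ℕ → ℕ) (hidx : ∀ j ≤ h, idx j < d (j + 1))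
    (k : ℕ) (hk : k = ∑ j ∈ Finset.range (h + 1), Dprod d j * idx j)
    (ν : M) (w : ℤ) (hw : w ≤ -(k : ℤ)) (hν : ν ∈ ℳ w)
    (hkill : ∀ j ≤ h, (yvar F d j) ^ (d (j + 1) - idx j) • ν = 0) :
    ∃ μ : M, (∏ j ∈ Finset.range (h + 1), (yvar F d j) ^ idx j) • μ = ν :=
  statement15_general F d M ℳ hgr htame h idx k hk ν w hw hν hkill
end
end
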